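/- Any spherical polygon in S² (closed curve made of finitely many spherical segments, each of length in (0,π)) has total length at least 2π provided the origin lies in the convex hull of the polygon. Equivalently: if u_0,...,u_{n-1} ∈ S² satisfy 0 ∈ conv{u_0,...,u_{n-1}}, then ∑_i d(u_{i−1},u_i) ≥ 2π, where d is spherical distance and indices are mod n. -/

import Mathlib

open Real
open scoped RealInnerProductSpace

/-- The spherical (geodesic) distance between unit vectors. -/
noncomputable def sdist (u v : EuclideanSpace ℝ (Fin 3)) : ℝ :=
  Real.arccos ⟪u, v⟫

/-!
If `∑ wᵢ uᵢ = 0` with `w ≥ 0` and `w_j > 0`, then `-u_j` is a nonnegative combination of the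
vertices. Adding the vertices to such a combination one at a time, each new partial sum is a
positive multiple of a point on the segment between the previous partial sum and the new vertex,
so it lies on the geodesic between their directions. The triangle inequality for angles then shows
that the closed polygon starting and ending at `u_j` is at least as long as a path
`u_j → -u_j → u_j`, whose length is `π + π`.
-/

open Finset InnerProductGeometry

theorem convexHull_range_eq_image_stdSimplex {R ι E : Type*} [Field R] [LinearOrder R]
    [IsStrictOrderedRing R] [Fintype ι] [AddCommGroup E] [Module R E] (v : ι → E) :
    convexHull R (Set.range v) = Fintype.linearCombination R v '' stdSimplex R ι := by
  classical
  rw [← convexHull_rangle_single_eq_stdSimplex, LinearMap.image_convexHull, ← Set.range_comp]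
  congr 2
  ext i
  simp [Fintype.linearCombination_apply_single]

theorem Fin.sum_range_add_ofNat {M : Type*} [AddCommMonoid M] {n : ℕ} [NeZero n]
    (f : Fin n → M) (j : Fin n) : ∑ i ∈ range n, f (j + Fin.ofNat n i) = ∑ i, f i := by
  rw [← Fin.sum_univ_eq_sum_range (fun i => f (j + Fin.ofNat n i))]
  simp only [Fin.ofNat_eq_cast, Fin.cast_val_eq_self]
  exact Equiv.sum_comp (Equiv.addLeft j) f

namespace InnerProductGeometry

variable {V : Type*} [NormedAddCommGroup V] [InnerProductSpace ℝ V]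

theorem angle_add_angle_add_smul {x : V} (y : V) (hx : x ≠ 0) {c : ℝ} (hc : 0 ≤ c) :
    angle x (x + c • y) + angle (x + c • y) y = angle x y := by
  rcases eq_or_ne y 0 with rfl | hy
  · simp [angle_self hx]
  set p : V := AffineMap.lineMap x y (c / (1 + c))
  have hp : x + c • y = (1 + c) • p := by
    simp only [p, AffineMap.lineMap_apply, vsub_eq_sub, vadd_eq_add, smul_add, smul_smul]
    field_simp
    module
  have hxpy : Wbtw ℝ x p y :=
    ⟨c / (1 + c), ⟨by positivity, by rw [div_le_one (by positivity)]; linarith⟩, rfl⟩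
  have h := EuclideanGeometry.angle_add_of_ne_of_ne hx.symm hy.symm hxpy
  simp only [EuclideanGeometry.angle, vsub_eq_sub, sub_zero] at h
  rwa [hp, angle_smul_right_of_pos _ _ (by positivity), angle_smul_left_of_pos _ _ (by positivity)]

noncomputable def sphericalPathLength (v : ℕ → V) (k : ℕ) : ℝ :=
  ∑ i ∈ range k, angle (v i) (v (i + 1))

variable {v : ℕ → V}

theorem sphericalPathLength_succ (k : ℕ) :
    sphericalPathLength v (k + 1) = sphericalPathLength v k + angle (v k) (v (k + 1)) :=
  sum_range_succ _ _

theorem angle_le_sphericalPathLength (hv₀ : v 0 ≠ 0) (k : ℕ) :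
    angle (v 0) (v k) ≤ sphericalPathLength v k := by
  induction k with
  | zero => simp [sphericalPathLength, angle_self hv₀]
  | succ k ih =>
    rw [sphericalPathLength_succ]
    linarith [angle_le_angle_add_angle (v 0) (v k) (v (k + 1))]

theorem angle_add_angle_le_sphericalPathLength (hv₀ : v 0 ≠ 0) {c : ℕ → ℝ}
    (hc : ∀ i, 0 ≤ c i) (k : ℕ) (hm : ∑ i ∈ range k, c i • v i ≠ 0) :
    angle (v 0) (∑ i ∈ range k, c i • v i) + angle (∑ i ∈ range k, c i • v i) (v k) ≤
      sphericalPathLength v k := by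
  induction k with
  | zero => simp at hm
  | succ k ih =>
    rw [sum_range_succ] at hm ⊢
    rw [sphericalPathLength_succ]
    set q := ∑ i ∈ range k, c i • v i
    rcases eq_or_ne q 0 with hq | hq
    · rw [hq, zero_add] at hm ⊢
      have hck : 0 < c k := (hc k).lt_of_ne' (smul_ne_zero_iff.1 hm).1
      rw [angle_smul_right_of_pos _ _ hck, angle_smul_left_of_pos _ _ hck]
      linarith [angle_le_sphericalPathLength hv₀ k]
    · have hgeodesic := angle_add_angle_add_smul (v k) hq (hc k)
      linarith [ih hq, angle_le_angle_add_angle (v 0) q (q + c k • v k),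
        angle_le_angle_add_angle (q + c k • v k) (v k) (v (k + 1))]

theorem two_pi_le_sphericalPathLength {n : ℕ} (hv : v (n + 1) = v 0) (hv₀ : v 0 ≠ 0)
    {c : ℕ → ℝ} (hc : ∀ i, 0 ≤ c i) (hc₀ : 0 < c 0) (h : ∑ i ∈ range (n + 1), c i • v i = 0) :
    2 * π ≤ sphericalPathLength v (n + 1) := by
  set c' := Function.update c 0 0
  have hc' : ∀ i, 0 ≤ c' i := by
    intro i
    rcases eq_or_ne i 0 with rfl | hi <;> simp [c', *]
  have hm : ∑ i ∈ range (n + 1), c' i • v i = c 0 • -v 0 := by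
    rw [sum_range_succ'] at h ⊢
    simp only [c', Function.update_self, Function.update_of_ne (Nat.succ_ne_zero _), zero_smul,
      add_zero, smul_neg]
    exact eq_neg_of_add_eq_zero_left h
  have hlen := angle_add_angle_le_sphericalPathLength hv₀ hc' (n + 1)
    (by rw [hm]; exact smul_ne_zero hc₀.ne' (neg_ne_zero.2 hv₀))
  rw [hm, hv, angle_smul_right_of_pos _ _ hc₀, angle_smul_left_of_pos _ _ hc₀, angle_neg_right,
    angle_neg_left, angle_self hv₀] at hlen
  linarith

theorem two_pi_le_sum_angle_of_sum_smul_eq_zero {n : ℕ} [NeZero n] (u : Fin n → V)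
    {w : Fin n → ℝ} (hw : ∀ i, 0 ≤ w i) (h : ∑ i, w i • u i = 0) {j : Fin n} (hj : 0 < w j)
    (hu : u j ≠ 0) :
    2 * π ≤ ∑ i, angle (u (i - 1)) (u i) := by
  obtain ⟨n, rfl⟩ := Nat.exists_eq_succ_of_ne_zero (NeZero.ne n)
  have hlen : ∑ i, angle (u (i - 1)) (u i) =
      sphericalPathLength (fun i => u (j + Fin.ofNat _ i)) (n + 1) := by
    rw [← Equiv.sum_comp (Equiv.addRight 1), ← Fin.sum_range_add_ofNat _ j]
    open Fin.CommRing in simp [sphericalPathLength, ← add_assoc]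
  rw [hlen]
  refine two_pi_le_sphericalPathLength (c := fun i => w (j + Fin.ofNat _ i)) (by simp)
    (by simpa) (fun i => hw _) (by simpa) ?_
  rw [Fin.sum_range_add_ofNat (fun i => w i • u i) j]
  exact h

end InnerProductGeometry

theorem sdist_eq_angle {u v : EuclideanSpace ℝ (Fin 3)} (hu : ‖u‖ = 1) (hv : ‖v‖ = 1) :
    sdist u v = angle u v := by
  simp [sdist, angle, hu, hv]

/-- Discrete Fenchel inequality on the sphere: if the origin lies in the convex hull of
unit vectors `u 0, …, u (n-1)`, then the total spherical length of the closed spherical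
polygon through them is at least `2π`. -/
theorem spherical_perimeter_ge_two_pi {n : ℕ} [NeZero n]
    (u : Fin n → EuclideanSpace ℝ (Fin 3))
    (hu : ∀ i : Fin n, ‖u i‖ = 1)
    (h0 : (0 : EuclideanSpace ℝ (Fin 3)) ∈ convexHull ℝ (Set.range u)) :
    2 * π ≤ ∑ i : Fin n, sdist (u (i - 1)) (u i) := by
  rw [convexHull_range_eq_image_stdSimplex] at h0
  obtain ⟨w, ⟨hw₀, hw₁⟩, hwu⟩ := h0
  obtain ⟨j, -, hj⟩ := exists_ne_zero_of_sum_ne_zero (hw₁ ▸ one_ne_zero)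
  simp_rw [sdist_eq_angle (hu _) (hu _)]
  exact two_pi_le_sum_angle_of_sum_smul_eq_zero u hw₀ hwu ((hw₀ j).lt_of_ne' hj)
    (norm_ne_zero_iff.1 (by simp [hu]))
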